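/- arXiv:2502.05658 — 2 statements merged into one kernel-verified Lean document; each statement's English description precedes it below -/
import Mathlib

section
/- Consider the two-qubit (4×4) density matrix σ(t) = |ψ(t)⟩⟨ψ(t)| + O(t²) where |ψ(t)⟩ = (1 − κt)|01⟩ − it|10⟩ (unnormalized, κ > 0, t small). Then for any κ > 0 there is no family of separable two-qubit states σ_sep(t) with ‖σ(t) − σ_sep(t)‖₁ = O(t²) as t → 0. Concretely: the partial transpose of the normalized state σ(t)/Tr σ(t) has a negative eigenvalue of magnitude Ω(t), whereas any separable state has positive semi-definite partial transpose. -/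
open Matrix
open scoped ComplexOrder Kronecker

/-- Trace norm `‖A‖₁ = Tr √(A†A)`. -/
noncomputable def traceNorm {n : Type*} [Fintype n] [DecidableEq n]
    (A : Matrix n n ℂ) : ℝ :=
  (open scoped MatrixOrder in CFC.sqrt (Aᴴ * A)).trace.re

/-- A two-qubit operator is separable if it is a convex (nonnegative) combination
of Kronecker products of positive semi-definite single-qubit operators. -/
def IsSepState (ρ : Matrix (Fin 2 × Fin 2) (Fin 2 × Fin 2) ℂ) : Prop :=
  ∃ (r : ℕ) (w : Fin r → ℝ) (A B : Fin r → Matrix (Fin 2) (Fin 2) ℂ),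
    (∀ i, 0 ≤ w i) ∧ (∀ i, (A i).PosSemidef) ∧ (∀ i, (B i).PosSemidef) ∧
    ρ = ∑ i, (w i : ℂ) • (A i ⊗ₖ B i)

/-- The (unnormalized) vector `|ψ(t)⟩ = (1 − κt)|01⟩ − i t|10⟩`. -/
noncomputable def psiVec (κ t : ℝ) : Fin 2 × Fin 2 → ℂ := fun p =>
  if p = ((0 : Fin 2), (1 : Fin 2)) then (1 : ℂ) - (κ : ℂ) * (t : ℂ)
  else if p = ((1 : Fin 2), (0 : Fin 2)) then -Complex.I * (t : ℂ) else 0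

/-- The pure state `|ψ(t)⟩⟨ψ(t)|`. -/
noncomputable def psiProj (κ t : ℝ) : Matrix (Fin 2 × Fin 2) (Fin 2 × Fin 2) ℂ :=
  fun p r => psiVec κ t p * star (psiVec κ t r)

section Aux

set_option linter.unusedSectionVars false

variable {n : Type*} [Fintype n] [DecidableEq n]

lemma diag_im_zero {A : Matrix n n ℂ} (hA : A.PosSemidef) (i : n) : (A i i).im = 0 := by
  have h := hA.1
  have : (starRingEnd ℂ) (A i i) = A i i := by
    conv_rhs => rw [← h]
    simp [Matrix.conjTranspose_apply]
  simpa [Complex.conj_eq_iff_im] using this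

lemma diag_re_nonneg {A : Matrix n n ℂ} (hA : A.PosSemidef) (i : n) : 0 ≤ (A i i).re := by
  have h := hA.re_dotProduct_nonneg (Pi.single i 1)
  simpa [dotProduct, mulVec, Pi.single_apply, Finset.sum_ite_eq, mul_comm] using h

lemma quad_form {A : Matrix n n ℂ} (hA : A.PosSemidef) {i j : n} (hij : i ≠ j)
    (s r : ℝ) :
    0 ≤ Complex.normSq (A i j) * (A i i).re * s ^ 2
        - 2 * Complex.normSq (A i j) * s * r + (A j j).re * r ^ 2 := by
  set z := A i j with hz
  set x : n → ℂ := fun k => if k = i then -(s : ℂ) * z else if k = j then (r : ℂ) else 0 with hx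
  have hji : A j i = (starRingEnd ℂ) z := by
    conv_lhs => rw [← hA.1]
    simp [Matrix.conjTranspose_apply, hz]
  have key := hA.re_dotProduct_nonneg x
  have hsum : ∀ k, (∑ l, A k l * x l) = A k i * (-(s : ℂ) * z) + A k j * (r : ℂ) := by
    intro k
    have : ∀ l, A k l * x l =
        (if l = i then A k i * (-(s : ℂ) * z) else 0)
        + (if l = j then A k j * (r : ℂ) else 0) := by
      intro l
      by_cases h1 : l = i <;> by_cases h2 : l = j
      · exact absurd (h1 ▸ h2) hij
      · subst h1; simp [hx, hij]
      · subst h2; simp [hx, hij, Ne.symm]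
      · simp [hx, h1, h2]
    rw [Finset.sum_congr rfl (fun l _ => this l), Finset.sum_add_distrib]
    simp
  have hdot : (dotProduct (star x) (A *ᵥ x)).re =
      Complex.normSq z * (A i i).re * s ^ 2 - 2 * Complex.normSq z * s * r + (A j j).re * r ^ 2 := by
    have houter : dotProduct (star x) (A *ᵥ x) = ∑ k, (starRingEnd ℂ) (x k) * (A k i * (-(s : ℂ) * z) + A k j * (r : ℂ)) := by
      simp only [dotProduct, mulVec, Pi.star_apply, Complex.star_def]
      exact Finset.sum_congr rfl fun k _ => by rw [hsum k]
    rw [houter]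
    have : ∀ k, (starRingEnd ℂ) (x k) * (A k i * (-(s : ℂ) * z) + A k j * (r : ℂ)) =
        (if k = i then (-(s:ℂ) * (starRingEnd ℂ) z) * (A i i * (-(s : ℂ) * z) + z * (r : ℂ)) else 0)
        + (if k = j then (r:ℂ) * (A j i * (-(s : ℂ) * z) + A j j * (r : ℂ)) else 0) := by
      intro k
      by_cases h1 : k = i <;> by_cases h2 : k = j
      · exact absurd (h1 ▸ h2) hij
      · subst h1; simp [hx, hz, hij]
      · subst h2; simp [hx, hij, Ne.symm]
      · simp [hx, h1, h2]
    rw [Finset.sum_congr rfl (fun k _ => this k), Finset.sum_add_distrib]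
    simp only [Finset.sum_ite_eq', Finset.mem_univ, if_true]
    rw [hji]
    have him_i := diag_im_zero hA i
    have him_j := diag_im_zero hA j
    simp [Complex.add_re, Complex.mul_re, Complex.mul_im, Complex.normSq_apply,
      Complex.conj_re, Complex.conj_im, him_i, him_j]
    ring
  rw [← hdot]; exact key

lemma psd_entry_sq {A : Matrix n n ℂ} (hA : A.PosSemidef) (i j : n) :
    Complex.normSq (A i j) ≤ (A i i).re * (A j j).re := by
  have hp : 0 ≤ (A i i).re := diag_re_nonneg hA i
  have hq : 0 ≤ (A j j).re := diag_re_nonneg hA j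
  by_cases hij : i = j
  · subst hij
    have him := diag_im_zero hA i
    rw [Complex.normSq_apply, him]
    nlinarith
  · have quad := quad_form hA hij
    set d := Complex.normSq (A i j) with hd
    set p := (A i i).re
    set q := (A j j).re
    have hd0 : 0 ≤ d := Complex.normSq_nonneg _
    rcases eq_or_lt_of_le hd0 with h | h
    · rw [← h]; positivity
    by_cases hq0 : q = 0
    · exfalso
      have := quad 1 ((p * d + 1) / (2 * d))
      rw [hq0] at this
      have h2 : 2 * d * ((p * d + 1) / (2 * d)) = p * d + 1 := by
        field_simp
      nlinarith
    · have hq' : 0 < q := lt_of_le_of_ne hq (Ne.symm hq0)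
      have hqd := quad 1 (d / q)
      have h5 : d ^ 2 ≤ d * p * q := by
        have h6 : 0 ≤ (d * p * 1 ^ 2 - 2 * d * 1 * (d / q) + q * (d / q) ^ 2) * q :=
          mul_nonneg hqd hq'.le
        have h7 : (d * p * 1 ^ 2 - 2 * d * 1 * (d / q) + q * (d / q) ^ 2) * q
            = d * p * q - d ^ 2 := by field_simp; ring
        linarith [h7 ▸ h6]
      nlinarith

open scoped MatrixOrder in
lemma traceNorm_nonneg (A : Matrix n n ℂ) : 0 ≤ traceNorm A := by
  unfold traceNorm
  have hSp : (CFC.sqrt (Aᴴ * A)).PosSemidef :=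
    Matrix.nonneg_iff_posSemidef.mp (CFC.sqrt_nonneg _)
  rw [Matrix.trace, Complex.re_sum]
  exact Finset.sum_nonneg fun k _ => diag_re_nonneg hSp k

open scoped MatrixOrder in
lemma entry_le_traceNorm (A : Matrix n n ℂ) (p q : n) :
    ‖A p q‖ ≤ traceNorm A := by
  have hS := Matrix.posSemidef_conjTranspose_mul_self A
  set S := CFC.sqrt (Aᴴ * A) with hSdef
  have hSp : S.PosSemidef := Matrix.nonneg_iff_posSemidef.mp (CFC.sqrt_nonneg _)
  have hmul : S * S = Aᴴ * A := CFC.sqrt_mul_sqrt_self _ (Matrix.nonneg_iff_posSemidef.mpr hS)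
  set T := traceNorm A with hT
  have hTsum : T = ∑ k, (S k k).re := by
    rw [hT]; unfold traceNorm
    rw [Matrix.trace, Complex.re_sum]
    rfl
  have hT0 : 0 ≤ T := traceNorm_nonneg A
  have h1 : Complex.normSq (A p q) ≤ ((Aᴴ * A) q q).re := by
    have : (Aᴴ * A) q q = ∑ k, ((Complex.normSq (A k q) : ℝ) : ℂ) := by
      rw [Matrix.mul_apply]
      refine Finset.sum_congr rfl fun k _ => ?_
      rw [Matrix.conjTranspose_apply]
      simp [Complex.star_def, Complex.normSq_eq_conj_mul_self]
    rw [this, Complex.re_sum]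
    simp only [Complex.ofReal_re]
    exact Finset.single_le_sum (f := fun k => Complex.normSq (A k q))
      (fun k _ => Complex.normSq_nonneg _) (Finset.mem_univ p)
  have h2 : ((Aᴴ * A) q q).re = ∑ k, Complex.normSq (S q k) := by
    rw [← hmul, Matrix.mul_apply, Complex.re_sum]
    refine Finset.sum_congr rfl fun k _ => ?_
    have : S k q = (starRingEnd ℂ) (S q k) := by
      conv_lhs => rw [← hSp.1]
      simp [Matrix.conjTranspose_apply]
    rw [this]
    simp [Complex.mul_conj]
  have h3 : ∑ k, Complex.normSq (S q k) ≤ (S q q).re * T := by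
    rw [hTsum, Finset.mul_sum]
    exact Finset.sum_le_sum fun k _ => psd_entry_sq hSp q k
  have h4 : (S q q).re ≤ T := by
    rw [hTsum]
    exact Finset.single_le_sum (fun k _ => diag_re_nonneg hSp k) (Finset.mem_univ q)
  have h5 : Complex.normSq (A p q) ≤ T * T := by
    calc Complex.normSq (A p q) ≤ ((Aᴴ * A) q q).re := h1
      _ = ∑ k, Complex.normSq (S q k) := h2
      _ ≤ (S q q).re * T := h3
      _ ≤ T * T := by nlinarith [diag_re_nonneg hSp q]
  have habs : ‖A p q‖ ^ 2 = Complex.normSq (A p q) := Complex.sq_norm _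
  nlinarith [norm_nonneg (A p q)]

end Aux

/-- The witness functional (real part of the PT quadratic form at `|00⟩ + i|11⟩`). -/
noncomputable def gW (ρ : Matrix (Fin 2 × Fin 2) (Fin 2 × Fin 2) ℂ) : ℂ :=
  ρ (0,0) (0,0) + ρ (1,1) (1,1) + Complex.I * ρ (0,1) (1,0) - Complex.I * ρ (1,0) (0,1)

lemma gW_sub (X Y : Matrix (Fin 2 × Fin 2) (Fin 2 × Fin 2) ℂ) :
    gW (X - Y) = gW X - gW Y := by
  simp [gW, Matrix.sub_apply]; ring

lemma gW_sum {m : ℕ} (f : Fin m → Matrix (Fin 2 × Fin 2) (Fin 2 × Fin 2) ℂ) :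
    gW (∑ i, f i) = ∑ i, gW (f i) := by
  simp [gW, Matrix.sum_apply, Finset.sum_add_distrib, Finset.mul_sum, ← Finset.sum_sub_distrib]
  rw [← Finset.sum_add_distrib, ← Finset.sum_add_distrib, ← Finset.sum_sub_distrib]

lemma gW_smul (c : ℂ) (M : Matrix (Fin 2 × Fin 2) (Fin 2 × Fin 2) ℂ) :
    gW (c • M) = c * gW M := by
  simp [gW, Matrix.smul_apply, smul_eq_mul]; ring

set_option maxHeartbeats 1000000 in
lemma gW_kron_nonneg {A B : Matrix (Fin 2) (Fin 2) ℂ}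
    (hA : A.PosSemidef) (hB : B.PosSemidef) : 0 ≤ (gW (A ⊗ₖ B)).re := by
  have hA10 : A 1 0 = (starRingEnd ℂ) (A 0 1) := by
    conv_lhs => rw [← hA.1]
    simp [Matrix.conjTranspose_apply]
  have hB10 : B 1 0 = (starRingEnd ℂ) (B 0 1) := by
    conv_lhs => rw [← hB.1]
    simp [Matrix.conjTranspose_apply]
  have ha0 := diag_re_nonneg hA 0
  have ha1 := diag_re_nonneg hA 1
  have hb0 := diag_re_nonneg hB 0
  have hb1 := diag_re_nonneg hB 1
  have ia0 := diag_im_zero hA 0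
  have ia1 := diag_im_zero hA 1
  have ib0 := diag_im_zero hB 0
  have ib1 := diag_im_zero hB 1
  have hAe := psd_entry_sq hA 0 1
  have hBe := psd_entry_sq hB 0 1
  have e : (gW (A ⊗ₖ B)).re =
      (A 0 0).re * (B 0 0).re + (A 1 1).re * (B 1 1).re
      + 2 * ((A 0 1).re * (B 0 1).im - (A 0 1).im * (B 0 1).re) := by
    simp [gW, Matrix.kroneckerMap_apply, hA10, hB10, Complex.mul_re, Complex.mul_im,
      Complex.add_re, Complex.sub_re, ia0, ia1, ib0, ib1, Complex.conj_re, Complex.conj_im]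
    ring
  rw [e]
  rw [Complex.normSq_apply] at hAe hBe
  set u := (A 0 1).re; set v := (A 0 1).im
  set x := (B 0 1).re; set y := (B 0 1).im
  set a0 := (A 0 0).re; set a1 := (A 1 1).re
  set b0 := (B 0 0).re; set b1 := (B 1 1).re
  have h1 : (u*y - v*x)^2 ≤ (u^2+v^2)*(x^2+y^2) := by linarith [sq_nonneg (u*x+v*y)]
  have h2 : (u^2+v^2)*(x^2+y^2) ≤ (a0*a1)*(b0*b1) := by
    linarith [mul_le_mul hAe hBe (by linarith [sq_nonneg x, sq_nonneg y]) (mul_nonneg ha0 ha1)]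
  have h3 : 4*((a0*a1)*(b0*b1)) ≤ (a0*b0 + a1*b1)^2 := by linarith [sq_nonneg (a0*b0 - a1*b1)]
  have hS : 0 ≤ a0*b0 + a1*b1 := by
    have := mul_nonneg ha0 hb0
    have := mul_nonneg ha1 hb1
    linarith
  have hc2 : (2*(u*y - v*x))^2 ≤ (a0*b0 + a1*b1)^2 := by linarith [h1, h2, h3]
  nlinarith [hS, hc2, sq_nonneg (a0*b0 + a1*b1 + 2*(u*y - v*x))]

lemma gW_abs_le (D : Matrix (Fin 2 × Fin 2) (Fin 2 × Fin 2) ℂ) :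
    |(gW D).re| ≤ 4 * traceNorm D := by
  have e : gW D = D (0,0) (0,0) + (D (1,1) (1,1)
      + (Complex.I * D (0,1) (1,0) + (-(Complex.I * D (1,0) (0,1))))) := by
    simp [gW]; ring
  have h1 := entry_le_traceNorm D (0,0) (0,0)
  have h2 := entry_le_traceNorm D (1,1) (1,1)
  have h3 := entry_le_traceNorm D (0,1) (1,0)
  have h4 := entry_le_traceNorm D (1,0) (0,1)
  calc |(gW D).re| ≤ ‖gW D‖ := Complex.abs_re_le_norm _
    _ ≤ ‖D (0,0) (0,0)‖ + (‖D (1,1) (1,1)‖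
        + (‖D (0,1) (1,0)‖ + ‖D (1,0) (0,1)‖)) := by
      rw [e]
      have t1 : ‖Complex.I * D (0,1) (1,0) + -(Complex.I * D (1,0) (0,1))‖
          ≤ ‖D (0,1) (1,0)‖ + ‖D (1,0) (0,1)‖ := by
        refine (norm_add_le _ _).trans ?_
        rw [norm_neg]
        simp [norm_mul, Complex.norm_I]
      have t2 : ‖D (1,1) (1,1) + (Complex.I * D (0,1) (1,0) + -(Complex.I * D (1,0) (0,1)))‖
          ≤ ‖D (1,1) (1,1)‖ + (‖D (0,1) (1,0)‖ + ‖D (1,0) (0,1)‖) :=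
        (norm_add_le _ _).trans (add_le_add_right t1 _)
      exact (norm_add_le _ _).trans (add_le_add_right t2 _)
    _ ≤ 4 * traceNorm D := by linarith

lemma gW_psi (κ t : ℝ) : (gW (psiProj κ t)).re = -2*t + 2*κ*t^2 := by
  have h1 : psiVec κ t (0,0) = 0 := by
    unfold psiVec
    rw [if_neg (by decide), if_neg (by decide)]
  have h2 : psiVec κ t (1,1) = 0 := by
    unfold psiVec
    rw [if_neg (by decide), if_neg (by decide)]
  have h3 : psiVec κ t (0,1) = (1 : ℂ) - (κ : ℂ) * (t : ℂ) := by
    unfold psiVec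
    rw [if_pos rfl]
  have h4 : psiVec κ t (1,0) = -Complex.I * (t : ℂ) := by
    unfold psiVec
    rw [if_neg (by decide), if_pos rfl]
  simp only [gW, psiProj, h1, h2, h3, h4, zero_mul, mul_zero, add_zero, zero_add]
  simp [Complex.mul_re, Complex.mul_im, Complex.sub_re, Complex.sub_im,
    Complex.add_re, Complex.add_im, Complex.I_re, Complex.I_im,
    Complex.ofReal_re, Complex.ofReal_im, Complex.conj_re, Complex.conj_im]
  ring

/-- For any `κ > 0`, a family `σ(t) = |ψ(t)⟩⟨ψ(t)| + O(t²)` with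
`|ψ(t)⟩ = (1 − κt)|01⟩ − i t|10⟩` admits no separable approximation to `O(t²)`
in trace norm as `t → 0`. -/
theorem no_separable_approximation (κ : ℝ) (hκ : 0 < κ)
    (σ : ℝ → Matrix (Fin 2 × Fin 2) (Fin 2 × Fin 2) ℂ)
    (hσ : ∃ K₀ ε₀ : ℝ, 0 < ε₀ ∧ ∀ t : ℝ, 0 < t → t < ε₀ →
      traceNorm (σ t - psiProj κ t) ≤ K₀ * t ^ 2) :
    ¬ ∃ (K ε : ℝ) (σsep : ℝ → Matrix (Fin 2 × Fin 2) (Fin 2 × Fin 2) ℂ),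
        0 < ε ∧ ∀ t : ℝ, 0 < t → t < ε →
          IsSepState (σsep t) ∧ traceNorm (σ t - σsep t) ≤ K * t ^ 2 := by
  obtain ⟨K₀, ε₀, hε₀, h0⟩ := hσ
  rintro ⟨K, ε, σsep, hε, h⟩
  set M := κ + |K₀| + |K| + 1 with hM
  have hM0 : 0 < M := by positivity
  set m := min ε (min ε₀ (1 / (4 * M))) with hm
  have hm0 : 0 < m := lt_min hε (lt_min hε₀ (by positivity))
  set t := m / 2 with htdef
  have ht0 : 0 < t := by positivity
  have htm : t < m := by rw [htdef]; linarith
  have htε : t < ε := lt_of_lt_of_le htm (min_le_left _ _)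
  have htε₀ : t < ε₀ := lt_of_lt_of_le htm ((min_le_right _ _).trans (min_le_left _ _))
  have htM : 4 * M * t ≤ 1 := by
    have : t ≤ 1 / (4 * M) := le_of_lt (lt_of_lt_of_le htm ((min_le_right _ _).trans (min_le_right _ _)))
    rw [le_div_iff₀ (by positivity)] at this
    linarith
  obtain ⟨hsep, hnorm⟩ := h t ht0 htε
  have h0t := h0 t ht0 htε₀
  -- separability gives nonnegativity of the witness
  obtain ⟨r, w, A, B, hw, hA, hB, hrep⟩ := hsep
  have hsep_nonneg : 0 ≤ (gW (σsep t)).re := by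
    rw [hrep, gW_sum, Complex.re_sum]
    refine Finset.sum_nonneg fun i _ => ?_
    rw [gW_smul]
    rw [Complex.re_ofReal_mul]
    exact mul_nonneg (hw i) (gW_kron_nonneg (hA i) (hB i))
  -- bounds via entries and trace norm
  have hb1 : |(gW (σ t - psiProj κ t)).re| ≤ 4 * (K₀ * t ^ 2) := by
    refine (gW_abs_le _).trans ?_
    linarith
  have hb2 : |(gW (σ t - σsep t)).re| ≤ 4 * (K * t ^ 2) := by
    refine (gW_abs_le _).trans ?_
    linarith
  have key : (gW (σsep t)).re = (-2*t + 2*κ*t^2)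
      + (gW (σ t - psiProj κ t)).re - (gW (σ t - σsep t)).re := by
    rw [gW_sub, gW_sub, ← gW_psi κ t]
    simp [Complex.sub_re]
  rw [key] at hsep_nonneg
  have e1 : (gW (σ t - psiProj κ t)).re ≤ 4 * (K₀ * t ^ 2) :=
    (le_abs_self _).trans hb1
  have e2 : -(4 * (K * t ^ 2)) ≤ (gW (σ t - σsep t)).re :=
    neg_le_of_abs_le hb2
  have hK : K ≤ |K| := le_abs_self K
  have hK0 : K₀ ≤ |K₀| := le_abs_self K₀
  nlinarith [sq_nonneg t, mul_pos ht0 ht0, mul_le_of_le_one_right (le_of_lt ht0) htM]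
end

section
/- Let L^(1), ..., L^(M) be (possibly time-dependent) superoperators with ‖L^(j)(s)‖_◇ ≤ ℓ_j for all s ≥ 0 and j, such that each L^(j) generates a family of contractions (e.g., they are Lindbladian generators so the generated maps have diamond norm at most 1). Let L(s) = Σ_j L^(j)(s), and let Φ be the first-order Trotterization of the evolution T exp(∫₀^t L(s) ds) with T steps of length δ = t/T, where each step applies sequentially the channels generated by L^(1), ..., L^(M) on the corresponding subinterval. Then ‖T exp(∫₀^t L(s) ds) − Φ‖_◇ ≤ (t²/T)(Σ_j ℓ_j)². -/
open Finset Set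

section Aux
variable {A : Type*} [NormedRing A]

lemma listProd_contraction : ∀ (l : List A), (∀ y ∈ l, ‖y‖ ≤ 1) → ∀ x : A, ‖l.prod * x‖ ≤ ‖x‖
  | [], _, x => by simp
  | y :: l, h, x => by
      have h1 : ‖y‖ ≤ 1 := h y List.mem_cons_self
      have h2 := listProd_contraction l (fun z hz => h z (List.mem_cons_of_mem _ hz)) x
      calc ‖(y :: l).prod * x‖ = ‖y * (l.prod * x)‖ := by rw [List.prod_cons, mul_assoc]
        _ ≤ ‖y‖ * ‖l.prod * x‖ := norm_mul_le _ _
        _ ≤ 1 * ‖x‖ := mul_le_mul h1 h2 (norm_nonneg _) zero_le_one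
        _ = ‖x‖ := one_mul _

lemma prod_expand : ∀ (m : ℕ) (q : Fin m → A) (c : Fin m → ℝ),
    (∀ i, ‖q i‖ ≤ 1) → (∀ i, ‖q i - 1‖ ≤ c i) →
    ‖(List.ofFn q).prod - (1 + ∑ i, (q i - 1))‖ ≤ ((∑ i, c i) ^ 2 - ∑ i, (c i) ^ 2) / 2
  | 0, q, c, _, _ => by simp
  | m + 1, q, c, h1, h2 => by
    have IH := prod_expand m (fun i => q i.succ) (fun i => c i.succ)
      (fun i => h1 i.succ) (fun i => h2 i.succ)
    have hIH0 : (0:ℝ) ≤ ((∑ i : Fin m, c i.succ) ^ 2 - ∑ i : Fin m, (c i.succ) ^ 2) / 2 :=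
      (norm_nonneg _).trans IH
    have hs : ‖∑ i : Fin m, (q i.succ - 1)‖ ≤ ∑ i : Fin m, c i.succ :=
      (norm_sum_le _ _).trans (Finset.sum_le_sum fun i _ => h2 i.succ)
    have hc0 : (0:ℝ) ≤ c 0 := (norm_nonneg _).trans (h2 0)
    have hC0 : (0:ℝ) ≤ ∑ i : Fin m, c i.succ := (norm_nonneg _).trans hs
    rw [List.ofFn_succ, List.prod_cons, Fin.sum_univ_succ, Fin.sum_univ_succ,
      Fin.sum_univ_succ]
    have key : q 0 * (List.ofFn fun i => q i.succ).prod -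
        (1 + ((q 0 - 1) + ∑ i : Fin m, (q i.succ - 1)))
        = q 0 * ((List.ofFn fun i => q i.succ).prod - (1 + ∑ i : Fin m, (q i.succ - 1)))
          + (q 0 - 1) * (∑ i : Fin m, (q i.succ - 1)) := by
      rw [mul_sub, sub_mul, mul_add, mul_one, one_mul]; abel
    rw [key]
    have b1 : ‖q 0 * ((List.ofFn fun i => q i.succ).prod - (1 + ∑ i : Fin m, (q i.succ - 1)))‖
        ≤ ((∑ i : Fin m, c i.succ) ^ 2 - ∑ i : Fin m, (c i.succ) ^ 2) / 2 := by
      calc _ ≤ ‖q 0‖ * ‖(List.ofFn fun i => q i.succ).prod - (1 + ∑ i : Fin m, (q i.succ - 1))‖ :=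
            norm_mul_le _ _
        _ ≤ 1 * (((∑ i : Fin m, c i.succ) ^ 2 - ∑ i : Fin m, (c i.succ) ^ 2) / 2) :=
            mul_le_mul (h1 0) IH (norm_nonneg _) zero_le_one
        _ = _ := one_mul _
    have b2 : ‖(q 0 - 1) * (∑ i : Fin m, (q i.succ - 1))‖ ≤ c 0 * ∑ i : Fin m, c i.succ :=
      (norm_mul_le _ _).trans (mul_le_mul (h2 0) hs (norm_nonneg _) hc0)
    have := (norm_add_le _ _).trans (add_le_add b1 b2)
    nlinarith [this]

end Aux

/-- First-order Trotter error bound for bounded time-dependent generators.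
The (super)operators live in a Banach algebra `A` (e.g. superoperators on a matrix
algebra, with the diamond norm). `E` is the propagator of `L(s) = Σ_j L_j(s)` from
time `0`, and `P j s s'` is the propagator of `L_j` from `s'` to `s`; all generated
evolutions are contractions (`‖·‖ ≤ 1`, as for channels in diamond norm). Then the
first-order Trotterization `Φ` with `T` steps of length `δ = t/T` satisfies
`‖E(t) − Φ‖ ≤ (t²/T)(Σ_j ℓ_j)²`. -/
theorem trotter_error_bound
    {A : Type*} [NormedRing A] [NormedAlgebra ℝ A] [CompleteSpace A]
    (M T : ℕ) (hT : 0 < T) (t : ℝ) (ht : 0 ≤ t)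
    (ℓ : Fin M → ℝ) (L : Fin M → ℝ → A)
    (hL : ∀ j, ∀ s : ℝ, 0 ≤ s → ‖L j s‖ ≤ ℓ j)
    (E : ℝ → A) (hE0 : E 0 = 1)
    (hE : ∀ s : ℝ, HasDerivAt E ((∑ j, L j s) * E s) s)
    (hEc : ∀ s : ℝ, 0 ≤ s → s ≤ t → ‖E s‖ ≤ 1)
    (P : Fin M → ℝ → ℝ → A)
    (hP0 : ∀ j s', P j s' s' = 1)
    (hP : ∀ j s', ∀ u : ℝ, HasDerivAt (fun v => P j v s') (L j u * P j u s') u)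
    (hPc : ∀ j s s', s' ≤ s → ‖P j s s'‖ ≤ 1) :
    ‖E t - ((List.range T).reverse.map (fun τ =>
        (List.ofFn (fun j : Fin M =>
          P j (((τ : ℝ) + 1) * (t / T)) ((τ : ℝ) * (t / T)))).prod)).prod‖
      ≤ (t ^ 2 / T) * (∑ j, ℓ j) ^ 2 := by
  have hTpos : (0:ℝ) < T := by exact_mod_cast hT
  set δ : ℝ := t / T with hδdef
  have hδ : 0 ≤ δ := div_nonneg ht hTpos.le
  set ℓtot : ℝ := ∑ j, ℓ j with hltotdef
  have hl0 : ∀ j, 0 ≤ ℓ j := fun j => (norm_nonneg _).trans (hL j 0 le_rfl)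
  have hltot : 0 ≤ ℓtot := Finset.sum_nonneg fun j _ => hl0 j
  have hTt : (T:ℝ) * δ = t := by rw [hδdef]; field_simp
  -- Lipschitz bound for E
  have lemA : ∀ a b : ℝ, 0 ≤ a → b ≤ t → ∀ s ∈ Set.Icc a b, ‖E s - E a‖ ≤ ℓtot * (s - a) := by
    intro a b ha hb
    refine norm_image_sub_le_of_norm_deriv_le_segment'
      (f' := fun s => (∑ j, L j s) * E s) (fun s _ => (hE s).hasDerivWithinAt) ?_
    intro s hs
    have hs0 : 0 ≤ s := ha.trans hs.1
    have hst : s ≤ t := hs.2.le.trans hb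
    calc ‖(∑ j, L j s) * E s‖ ≤ ‖∑ j, L j s‖ * ‖E s‖ := norm_mul_le _ _
      _ ≤ ℓtot * 1 := mul_le_mul
          ((norm_sum_le _ _).trans (Finset.sum_le_sum fun j _ => hL j s hs0))
          (hEc s hs0 hst) (norm_nonneg _) hltot
      _ = ℓtot := mul_one _
  -- Lipschitz bound for P
  have lemB : ∀ (j : Fin M) (a s : ℝ), 0 ≤ a → a ≤ s → ‖P j s a - 1‖ ≤ ℓ j * (s - a) := by
    intro j a s ha has
    have := norm_image_sub_le_of_norm_deriv_le_segment' (a := a) (b := s)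
      (f := fun v => P j v a) (f' := fun u => L j u * P j u a) (C := ℓ j)
      (fun u _ => (hP j a u).hasDerivWithinAt) ?_ s (Set.right_mem_Icc.2 has)
    · simpa [hP0 j a] using this
    · intro u hu
      calc ‖L j u * P j u a‖ ≤ ‖L j u‖ * ‖P j u a‖ := norm_mul_le _ _
        _ ≤ ℓ j * 1 := mul_le_mul (hL j u (ha.trans hu.1)) (hPc j u a hu.1)
            (norm_nonneg _) (hl0 j)
        _ = ℓ j := mul_one _
  -- second-order comparison for E vs. linearization
  have lemC : ∀ a b : ℝ, 0 ≤ a → a ≤ b → b ≤ t →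
      ‖E b - (1 + ∑ j, (P j b a - 1)) * E a‖
        ≤ (ℓtot ^ 2 + ∑ j, (ℓ j) ^ 2) / 2 * (b - a) ^ 2 := by
    intro a b ha hab hbt
    have hat : a ≤ t := hab.trans hbt
    have hEa : ‖E a‖ ≤ 1 := hEc a ha hat
    set K : ℝ := ∑ j, ℓ j * (ℓtot + ℓ j) with hKdef
    have hK : K = ℓtot ^ 2 + ∑ j, (ℓ j) ^ 2 := by
      rw [hKdef, Finset.sum_congr rfl (fun j _ => by ring :
          ∀ j ∈ Finset.univ, ℓ j * (ℓtot + ℓ j) = ℓ j * ℓtot + ℓ j ^ 2),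
        Finset.sum_add_distrib, ← Finset.sum_mul, ← hltotdef]
      ring
    set f : ℝ → A := fun s => E s - (1 + ∑ j, (P j s a - 1)) * E a with hfdef
    have hderiv : ∀ s : ℝ, HasDerivAt f (∑ j, L j s * (E s - P j s a * E a)) s := by
      intro s
      have h1 : HasDerivAt (fun s => (1 + ∑ j, (P j s a - 1)) * E a)
          ((∑ j, L j s * P j s a) * E a) s := by
        have hsum : HasDerivAt (fun s => 1 + ∑ j, (P j s a - 1))
            (∑ j, L j s * P j s a) s := by
          refine HasDerivAt.const_add 1 ?_
          exact HasDerivAt.fun_sum fun j _ => ((hP j a s).sub_const 1)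
        exact hsum.mul_const (E a)
      have h2 := (hE s).sub h1
      refine h2.congr_deriv ?_
      rw [Finset.sum_mul, Finset.sum_mul, ← Finset.sum_sub_distrib]
      exact Finset.sum_congr rfl fun j _ => by rw [mul_sub, mul_assoc]
    have hfa : f a = 0 := by simp [hfdef, hP0]
    have hbound : ∀ s ∈ Set.Ico a b, ‖∑ j, L j s * (E s - P j s a * E a)‖ ≤ K * (s - a) := by
      intro s hs
      have hs0 : 0 ≤ s := ha.trans hs.1
      have hsa : a ≤ s := hs.1
      have hsanon : 0 ≤ s - a := sub_nonneg.2 hsa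
      calc ‖∑ j, L j s * (E s - P j s a * E a)‖
          ≤ ∑ j, ‖L j s * (E s - P j s a * E a)‖ := norm_sum_le _ _
        _ ≤ ∑ j, ℓ j * ((ℓtot + ℓ j) * (s - a)) := by
            refine Finset.sum_le_sum fun j _ => ?_
            have hid : E s - P j s a * E a = (E s - E a) - (P j s a - 1) * E a := by
              rw [sub_mul, one_mul]; abel
            have hinner : ‖E s - P j s a * E a‖ ≤ (ℓtot + ℓ j) * (s - a) := by
              rw [hid]
              refine (norm_sub_le _ _).trans ?_
              have hA := lemA a b ha hbt s ⟨hsa, hs.2.le⟩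
              have hB : ‖(P j s a - 1) * E a‖ ≤ ℓ j * (s - a) := by
                calc ‖(P j s a - 1) * E a‖ ≤ ‖P j s a - 1‖ * ‖E a‖ := norm_mul_le _ _
                  _ ≤ ℓ j * (s - a) * 1 := mul_le_mul (lemB j a s ha hsa) hEa
                      (norm_nonneg _) (mul_nonneg (hl0 j) hsanon)
                  _ = ℓ j * (s - a) := mul_one _
              nlinarith
            calc ‖L j s * (E s - P j s a * E a)‖
                ≤ ‖L j s‖ * ‖E s - P j s a * E a‖ := norm_mul_le _ _
              _ ≤ ℓ j * ((ℓtot + ℓ j) * (s - a)) := mul_le_mul (hL j s hs0) hinner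
                  (norm_nonneg _) (hl0 j)
        _ = K * (s - a) := by
            rw [hKdef, Finset.sum_mul]
            exact Finset.sum_congr rfl fun j _ => by ring
    have hBder : ∀ x : ℝ, HasDerivAt (fun s => K / 2 * (s - a) ^ 2) (K * (x - a)) x := by
      intro x
      have h := (((hasDerivAt_id x).sub_const a).pow 2).const_mul (K / 2)
      refine h.congr_deriv ?_
      simp; ring
    have hfb := image_norm_le_of_norm_deriv_right_le_deriv_boundary
      (f := f) (f' := fun s => ∑ j, L j s * (E s - P j s a * E a))
      (a := a) (b := b)
      (fun s _ => (hderiv s).continuousAt.continuousWithinAt)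
      (fun s _ => (hderiv s).hasDerivWithinAt)
      (B := fun s => K / 2 * (s - a) ^ 2) (B' := fun s => K * (s - a))
      (by rw [hfa]; simp) hBder hbound (Set.right_mem_Icc.2 hab)
    rw [hfdef] at hfb
    calc ‖E b - (1 + ∑ j, (P j b a - 1)) * E a‖ ≤ K / 2 * (b - a) ^ 2 := hfb
      _ = (ℓtot ^ 2 + ∑ j, (ℓ j) ^ 2) / 2 * (b - a) ^ 2 := by rw [hK]
  -- one Trotter step
  have step : ∀ a b : ℝ, 0 ≤ a → a ≤ b → b ≤ t →
      ‖E b - (List.ofFn fun j : Fin M => P j b a).prod * E a‖ ≤ ℓtot ^ 2 * (b - a) ^ 2 := by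
    intro a b ha hab hbt
    have hEa : ‖E a‖ ≤ 1 := hEc a ha (hab.trans hbt)
    have hD := prod_expand M (fun j => P j b a) (fun j => ℓ j * (b - a))
      (fun j => hPc j b a hab) (fun j => lemB j a b ha hab)
    have hC := lemC a b ha hab hbt
    have key : E b - (List.ofFn fun j : Fin M => P j b a).prod * E a
        = (E b - (1 + ∑ j, (P j b a - 1)) * E a)
          - ((List.ofFn fun j : Fin M => P j b a).prod - (1 + ∑ j, (P j b a - 1))) * E a := by
      rw [sub_mul]; abel
    rw [key]
    have hDnn : (0:ℝ) ≤ ((∑ j, ℓ j * (b - a)) ^ 2 - ∑ j, (ℓ j * (b - a)) ^ 2) / 2 :=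
      (norm_nonneg _).trans hD
    have h2 : ‖((List.ofFn fun j : Fin M => P j b a).prod - (1 + ∑ j, (P j b a - 1))) * E a‖
        ≤ ((∑ j, ℓ j * (b - a)) ^ 2 - ∑ j, (ℓ j * (b - a)) ^ 2) / 2 := by
      calc _ ≤ ‖(List.ofFn fun j : Fin M => P j b a).prod - (1 + ∑ j, (P j b a - 1))‖ * ‖E a‖ :=
            norm_mul_le _ _
        _ ≤ ((∑ j, ℓ j * (b - a)) ^ 2 - ∑ j, (ℓ j * (b - a)) ^ 2) / 2 * 1 :=
            mul_le_mul hD hEa (norm_nonneg _) hDnn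
        _ = _ := mul_one _
    have hs1 : ∑ j, ℓ j * (b - a) = ℓtot * (b - a) := by rw [← Finset.sum_mul]
    have hs2 : ∑ j, (ℓ j * (b - a)) ^ 2 = (∑ j, (ℓ j) ^ 2) * (b - a) ^ 2 := by
      rw [Finset.sum_mul]
      exact Finset.sum_congr rfl fun j _ => by ring
    rw [hs1, hs2] at h2
    refine (norm_sub_le _ _).trans ?_
    nlinarith [hC, h2]
  -- telescoping over the T steps
  have contrS : ∀ n : ℕ, ∀ x : A,
      ‖(List.ofFn fun j : Fin M => P j (((n:ℝ) + 1) * δ) ((n:ℝ) * δ)).prod * x‖ ≤ ‖x‖ := by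
    intro n x
    refine listProd_contraction _ ?_ x
    intro y hy
    obtain ⟨j, rfl⟩ := List.mem_ofFn.1 hy
    exact hPc j _ _ (by nlinarith [hδ, Nat.cast_nonneg (α := ℝ) n])
  have aux : ∀ n : ℕ, n ≤ T →
      ‖E ((n:ℝ) * δ) - ((List.range n).reverse.map (fun τ =>
        (List.ofFn (fun j : Fin M =>
          P j (((τ : ℝ) + 1) * δ) ((τ : ℝ) * δ))).prod)).prod‖ ≤ n * (ℓtot ^ 2 * δ ^ 2) := by
    intro n
    induction n with
    | zero => simp [hE0]
    | succ n IH =>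
      intro hn
      have IH' := IH (Nat.le_of_succ_le hn)
      have ha : 0 ≤ (n:ℝ) * δ := by positivity
      have hab : (n:ℝ) * δ ≤ ((n:ℝ) + 1) * δ := by nlinarith
      have hbt : ((n:ℝ) + 1) * δ ≤ t := by
        rw [← hTt]
        have : (n:ℝ) + 1 ≤ (T:ℝ) := by exact_mod_cast hn
        nlinarith
      have hstep := step ((n:ℝ) * δ) (((n:ℝ) + 1) * δ) ha hab hbt
      have hlist : ((List.range (n+1)).reverse.map (fun τ =>
          (List.ofFn (fun j : Fin M =>
            P j (((τ : ℝ) + 1) * δ) ((τ : ℝ) * δ))).prod)).prod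
          = (List.ofFn fun j : Fin M => P j (((n:ℝ) + 1) * δ) ((n:ℝ) * δ)).prod *
            ((List.range n).reverse.map (fun τ =>
              (List.ofFn (fun j : Fin M =>
                P j (((τ : ℝ) + 1) * δ) ((τ : ℝ) * δ))).prod)).prod := by
        rw [List.range_succ, List.reverse_append]
        simp
      rw [hlist]
      have key : E ((↑(n+1):ℝ) * δ) -
          (List.ofFn fun j : Fin M => P j (((n:ℝ) + 1) * δ) ((n:ℝ) * δ)).prod *
            ((List.range n).reverse.map (fun τ =>
              (List.ofFn (fun j : Fin M =>
                P j (((τ : ℝ) + 1) * δ) ((τ : ℝ) * δ))).prod)).prod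
          = (E (((n:ℝ) + 1) * δ) -
              (List.ofFn fun j : Fin M => P j (((n:ℝ) + 1) * δ) ((n:ℝ) * δ)).prod *
                E ((n:ℝ) * δ))
            + (List.ofFn fun j : Fin M => P j (((n:ℝ) + 1) * δ) ((n:ℝ) * δ)).prod *
              (E ((n:ℝ) * δ) - ((List.range n).reverse.map (fun τ =>
                (List.ofFn (fun j : Fin M =>
                  P j (((τ : ℝ) + 1) * δ) ((τ : ℝ) * δ))).prod)).prod) := by
        push_cast
        rw [mul_sub]; abel
      rw [key]
      refine (norm_add_le _ _).trans ?_
      have hc := contrS n (E ((n:ℝ) * δ) - ((List.range n).reverse.map (fun τ =>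
        (List.ofFn (fun j : Fin M =>
          P j (((τ : ℝ) + 1) * δ) ((τ : ℝ) * δ))).prod)).prod)
      have hdd : (((n:ℝ) + 1) * δ - (n:ℝ) * δ) ^ 2 = δ ^ 2 := by ring
      rw [hdd] at hstep
      push_cast
      linarith [hc.trans IH']
  have hmain := aux T le_rfl
  rw [hTt] at hmain
  calc _ ≤ (T:ℝ) * (ℓtot ^ 2 * δ ^ 2) := hmain
    _ = t ^ 2 / T * ℓtot ^ 2 := by rw [hδdef]; field_simp
end
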